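/- arXiv:2003.03896 — 2 statements merged into one kernel-verified Lean document; each statement's English description precedes it below -/
import Mathlib

section
/- Fix k ≥ 0, N ≥ 2, and nonnegative integers a_j, b_j, m_j, h_j for 0 < j < N with a_j + b_j + m_j + k = C(h_j,2) for all j. Let F_j be the infinite (a_j,m_j,h_j)-staircase, G_j the infinite (b_{N−j}, m_{N−j}, h_{N−j})-staircase, F = min_j F_j, and G = min_j G_j. Then for all integers n and i: F(i) ≤ n (with i in the domain of F) if and only if G(C(n,2) − k − i) ≤ n (with C(n,2) − k − i in the domain of G). -/
/-- `C2 n = n(n−1)/2`. -/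
def C2 (n : ℤ) : ℤ := n * (n - 1) / 2

/-- The infinite `(a,m,h)`-staircase, intended for arguments `i ≥ a`:
the weakly increasing function whose values are `m+1` copies of `h` followed by,
for each `p ≥ 1`, `h+p−1` copies of `h+p`.  Equivalently, `staircase a m h i` is
the least `n ≥ h` with `i ≤ a + m + C2 n − C2 h`. -/
noncomputable def staircase (a m h i : ℤ) : ℤ :=
  sInf {n : ℤ | h ≤ n ∧ i ≤ a + m + C2 n - C2 h}

/-!
Both conditions unfold to the same linear constraints: since `staircase a m h` is the least
`n ≥ h` with `i ≤ a + m + C(n,2) − C(h,2)`, the statement `F_j(i) ≤ n` says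
`a ≤ i ≤ a + m + C(n,2) − C(h,2)` and `h ≤ n`. Substituting `i ↦ C(n,2) − k − i` and using
`a + b + m + k = C(h,2)` turns this into the same statement for `b`, so `F_j` and `G_{N−j}`
match up.
-/

lemma two_mul_C2 (n : ℤ) : 2 * C2 n = n * (n - 1) := by
  have hd : 2 ∣ n * (n - 1) := by
    rcases Int.even_or_odd n with ⟨c, hc⟩ | ⟨c, hc⟩
    · exact ⟨c * (n - 1), by rw [hc]; ring⟩
    · exact ⟨n * c, by rw [hc]; ring⟩
  rw [C2, Int.mul_ediv_cancel' hd]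

lemma C2_le_C2 {x y : ℤ} (hx : 0 ≤ x) (hxy : x ≤ y) : C2 x ≤ C2 y := by
  nlinarith [two_mul_C2 x, two_mul_C2 y, mul_nonneg (sub_nonneg.2 hxy) (by linarith : 0 ≤ x + y)]

lemma exists_le_C2 (h t : ℤ) : ∃ n, h ≤ n ∧ t ≤ C2 n := by
  set n := max h (max 3 t)
  have h3 : 3 ≤ n := (le_max_left _ _).trans (le_max_right _ _)
  have ht : t ≤ n := (le_max_right _ _).trans (le_max_right _ _)
  exact ⟨n, le_max_left _ _, by nlinarith [two_mul_C2 n]⟩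

lemma staircase_le_iff {a m h i n : ℤ} (hh : 0 ≤ h) :
    staircase a m h i ≤ n ↔ h ≤ n ∧ i ≤ a + m + C2 n - C2 h := by
  set S : Set ℤ := {n : ℤ | h ≤ n ∧ i ≤ a + m + C2 n - C2 h}
  have hbdd : BddBelow S := ⟨h, fun _ hx => hx.1⟩
  have hne : S.Nonempty := by
    obtain ⟨n, hn, hC2⟩ := exists_le_C2 h (i - a - m + C2 h)
    exact ⟨n, hn, by linarith⟩
  constructor
  · intro hle
    obtain ⟨hmin, hi⟩ : sInf S ∈ S := Int.csInf_mem hne hbdd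
    have := C2_le_C2 (hh.trans hmin) hle
    exact ⟨hmin.trans hle, by linarith⟩
  · exact fun hn => csInf_le hbdd hn

lemma staircase_le_iff_dual {a b m h k i n : ℤ} (hh : 0 ≤ h) (habmk : a + b + m + k = C2 h) :
    (a ≤ i ∧ staircase a m h i ≤ n) ↔
      (b ≤ C2 n - k - i ∧ staircase b m h (C2 n - k - i) ≤ n) := by
  rw [staircase_le_iff hh, staircase_le_iff hh]
  constructor
  · rintro ⟨hai, hhn, hi⟩
    exact ⟨by linarith, hhn, by linarith⟩
  · rintro ⟨hbi, hhn, hi⟩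
    exact ⟨by linarith, hhn, by linarith⟩

theorem stmt11_general (k N : ℕ) (a b m h : ℕ → ℕ)
    (hyp : ∀ j, 0 < j → j < N → (a j : ℤ) + b j + m j + k = C2 (h j)) (n i : ℤ) :
    -- F(i) ≤ n, with i in the domain of F = min of the Fⱼ
    (∃ j, 0 < j ∧ j < N ∧ (a j : ℤ) ≤ i ∧
        staircase (a j) (m j) (h j) i ≤ n) ↔
    -- G(C(n,2) − k − i) ≤ n, with C(n,2) − k − i in the domain of G = min of the Gⱼ,
    -- where Gⱼ is the (b_{N−j}, m_{N−j}, h_{N−j})-staircase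
    (∃ j, 0 < j ∧ j < N ∧ (b (N - j) : ℤ) ≤ C2 n - k - i ∧
        staircase (b (N - j)) (m (N - j)) (h (N - j)) (C2 n - k - i) ≤ n) := by
  constructor
  · rintro ⟨j, hj0, hjN, hF⟩
    refine ⟨N - j, by omega, by omega, ?_⟩
    rw [Nat.sub_sub_self hjN.le]
    exact (staircase_le_iff_dual (by positivity) (hyp j hj0 hjN)).1 hF
  · rintro ⟨j, hj0, hjN, hG⟩
    exact ⟨N - j, by omega, by omega,
      (staircase_le_iff_dual (by positivity) (hyp (N - j) (by omega) (by omega))).2 hG⟩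

theorem stmt11 (k N : ℕ) (hN : 2 ≤ N) (a b m h : ℕ → ℕ)
    (hyp : ∀ j, 0 < j → j < N → (a j : ℤ) + b j + m j + k = C2 (h j)) (n i : ℤ) :
    -- F(i) ≤ n, with i in the domain of F = min of the Fⱼ
    (∃ j, 0 < j ∧ j < N ∧ (a j : ℤ) ≤ i ∧
        staircase (a j) (m j) (h j) i ≤ n) ↔
    -- G(C(n,2) − k − i) ≤ n, with C(n,2) − k − i in the domain of G = min of the Gⱼ,
    -- where Gⱼ is the (b_{N−j}, m_{N−j}, h_{N−j})-staircase
    (∃ j, 0 < j ∧ j < N ∧ (b (N - j) : ℤ) ≤ C2 n - k - i ∧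
        staircase (b (N - j)) (m (N - j)) (h (N - j)) (C2 n - k - i) ≤ n) :=
  stmt11_general k N a b m h hyp n i
end

section
/- Let k ≥ 0, and suppose S = (γ(i) : i ≥ a) and S* = (δ(j) : j ≥ b) are sequences of partitions of deficit k with dinv(γ(i)) = i and dinv(δ(j)) = j for all indices. Let F(i) = mind(γ(i)) and G(j) = mind(δ(j)). Then Cat_{n,S}(q,t) = Cat_{n,S*}(t,q) for all n ≥ 0 if and only if for all integers n and i: F(i) ≤ n ⟺ G(C(n,2) − k − i) ≤ n (where a statement 'H(x) ≤ n' includes that x is in the domain of H). -/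
/-- The `i`-th part (0-indexed) of a partition given as a list, with 0 padding. -/
def parts (γ : List ℕ) (i : ℕ) : ℕ := γ.getD i 0

/-- The number of cells in the (0-indexed) `j`-th column of the diagram. -/
def conj (γ : List ℕ) (j : ℕ) : ℕ :=
  (List.range γ.length).countP (fun i => decide (j < parts γ i))

/-- The cells of the diagram of `γ`, 0-indexed. -/
def cells (γ : List ℕ) : Finset (ℕ × ℕ) :=
  (Finset.range γ.length ×ˢ Finset.range (γ.sum + 1)).filter (fun c => c.2 < parts γ c.1)

/-- The diagonal inversion count: cells with arm − leg ∈ {0,1}. -/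
def dinv (γ : List ℕ) : ℕ :=
  ((cells γ).filter (fun c =>
    (parts γ c.1 : ℤ) - 1 - c.2 = (conj γ c.2 : ℤ) - 1 - c.1 ∨
    (parts γ c.1 : ℤ) - 1 - c.2 = (conj γ c.2 : ℤ) - 1 - c.1 + 1)).card

/-- Minimum triangle size: least `n` with `γᵢ ≤ n − i` for all `i`. -/
noncomputable def mind (γ : List ℕ) : ℕ := sInf {n : ℕ | ∀ i < γ.length, parts γ i + i + 1 ≤ n}

/-- A list of naturals represents a partition if weakly decreasing with positive parts. -/
def IsPartition (γ : List ℕ) : Prop := List.Pairwise (· ≥ ·) γ ∧ ∀ x ∈ γ, 0 < x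

open MvPolynomial in
/-- `Cat_{n,S}(q,t) = Σ q^{C(n,2)−|γ|} t^{dinv γ}` over the members `γ(i)`, `i ≥ a`,
of the sequence `S` with `mind(γ(i)) ≤ n`; variable 0 is `q`, variable 1 is `t`. -/
noncomputable def CatSeq (a : ℕ) (γ : ℕ → List ℕ) (n : ℕ) : MvPolynomial (Fin 2) ℤ :=
  ∑ᶠ (i : ℕ) (_ : a ≤ i ∧ mind (γ i) ≤ n),
    X 0 ^ (n * (n - 1) / 2 - (γ i).sum) * X 1 ^ dinv (γ i)

open MvPolynomial in
/-- The same sum with the roles of `q` and `t` interchanged, i.e. `Cat_{n,S}(t,q)`. -/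
noncomputable def CatSeqSwap (a : ℕ) (γ : ℕ → List ℕ) (n : ℕ) : MvPolynomial (Fin 2) ℤ :=
  ∑ᶠ (i : ℕ) (_ : a ≤ i ∧ mind (γ i) ≤ n),
    X 1 ^ (n * (n - 1) / 2 - (γ i).sum) * X 0 ^ dinv (γ i)

/-!
A diagram with `mind γ ≤ n` fits in the staircase `(n-1, n-2, …, 0)`, so `|γ| ≤ C(n,2)` and no
exponent of `Cat_{n,S}` is truncated. For a sequence of deficit `k` indexed by `dinv`, the member
`γ(y)` contributes `q^x t^y` with `x + k + y = C(n,2)`. Hence `Cat_{n,S}(q,t)` is a sum of distinct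
monomials `q^x t^y` on that line, over the `y` with `F(y) ≤ n`, and `Cat_{n,S*}(t,q)` is the sum
over the `x` with `G(x) ≤ n`. Two such sums agree iff their supports do, which is the index
condition.
-/

open Finset MvPolynomial

lemma sum_eq_sum_range_parts (γ : List ℕ) : γ.sum = ∑ i ∈ range γ.length, parts γ i := by
  rw [← Fin.sum_univ_getElem, ← Fin.sum_univ_eq_sum_range]
  simp [parts]

lemma parts_le_sum (γ : List ℕ) (i : ℕ) : parts γ i ≤ γ.sum := by
  by_cases hi : i < γ.length
  · rw [parts, List.getD_eq_getElem _ _ hi]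
    exact List.le_sum_of_mem (List.getElem_mem hi)
  · rw [parts, List.getD_eq_default _ _ (not_lt.1 hi)]
    exact Nat.zero_le _

lemma parts_add_lt_of_mind_le {γ : List ℕ} {n i : ℕ} (h : mind γ ≤ n) (hi : i < γ.length) :
    parts γ i + i < n := by
  have hne : {n | ∀ i < γ.length, parts γ i + i + 1 ≤ n}.Nonempty :=
    ⟨γ.sum + γ.length, fun j hj => by have := parts_le_sum γ j; omega⟩
  have := Nat.sInf_mem hne i hi
  rw [mind] at h
  omega

lemma sum_le_of_mind_le {γ : List ℕ} {n : ℕ} (h : mind γ ≤ n) : γ.sum ≤ n * (n - 1) / 2 := by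
  have hlen : γ.length ≤ n := by
    by_contra! hn
    have := parts_add_lt_of_mind_le h hn
    omega
  calc γ.sum = ∑ i ∈ range γ.length, parts γ i := sum_eq_sum_range_parts γ
    _ ≤ ∑ i ∈ range γ.length, (n - 1 - i) := sum_le_sum fun i hi => by
        have := parts_add_lt_of_mind_le h (mem_range.1 hi)
        omega
    _ ≤ ∑ i ∈ range n, (n - 1 - i) := sum_le_sum_of_subset (range_subset_range.2 hlen)
    _ = ∑ i ∈ range n, i := sum_range_reflect id n
    _ = n * (n - 1) / 2 := sum_range_id n

lemma C2_natCast (n : ℕ) : C2 n = (n * (n - 1) / 2 : ℕ) := by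
  rcases n with _ | m
  · rfl
  · rw [C2, Int.natCast_div, Nat.add_sub_cancel]
    push_cast
    ring_nf

lemma forall_int_iff_forall_natCast {p : ℤ → Prop} (hneg : ∀ n < 0, p n) :
    (∀ n, p n) ↔ ∀ n : ℕ, p n := by
  refine ⟨fun h n => h n, fun h n => ?_⟩
  rcases lt_or_ge n 0 with hn | hn
  · exact hneg n hn
  · lift n to ℕ using hn
    exact h n

lemma forall_int_iff_forall_add_eq {N k : ℕ} {P Q : ℕ → Prop}
    (hP : ∀ y, P y → k + y ≤ N) (hQ : ∀ x, Q x → k + x ≤ N) :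
    (∀ i : ℤ, (∃ i' : ℕ, (i' : ℤ) = i ∧ P i') ↔ (∃ j' : ℕ, (j' : ℤ) = N - k - i ∧ Q j')) ↔
      ∀ x y : ℕ, x + k + y = N → (P y ↔ Q x) := by
  constructor
  · intro h x y hxy
    constructor
    · intro hy
      obtain ⟨x', hx', hQx'⟩ := (h y).1 ⟨y, rfl, hy⟩
      obtain rfl : x' = x := by omega
      exact hQx'
    · intro hx
      obtain ⟨y', hy', hPy'⟩ := (h (N - k - x)).2 ⟨x, by omega, hx⟩
      obtain rfl : y' = y := by omega
      exact hPy'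
  · intro h i
    constructor
    · rintro ⟨y, rfl, hy⟩
      have := hP y hy
      exact ⟨N - (k + y), by omega, (h _ y (by omega)).1 hy⟩
    · rintro ⟨x, hx, hQx⟩
      have := hQ x hQx
      exact ⟨N - (k + x), by omega, (h x _ (by omega)).2 hQx⟩

section Bivariate

variable {R : Type*} [CommSemiring R]

lemma single_zero_add_single_one_inj {a b c d : ℕ} :
    Finsupp.single (0 : Fin 2) a + Finsupp.single 1 b = Finsupp.single 0 c + Finsupp.single 1 d ↔
      (a, b) = (c, d) := by
  refine ⟨fun h => ?_, fun h => by simp_all⟩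
  have h0 := DFunLike.congr_fun h 0
  have h1 := DFunLike.congr_fun h 1
  simp only [Finsupp.add_apply, Finsupp.single_apply] at h0 h1
  simp_all

lemma coeff_sum_X_pow_mul_X_pow (s : Finset (ℕ × ℕ)) (p : ℕ × ℕ) :
    coeff (Finsupp.single 0 p.1 + Finsupp.single 1 p.2)
        (∑ e ∈ s, (X 0 ^ e.1 * X 1 ^ e.2 : MvPolynomial (Fin 2) R)) =
      if p ∈ s then 1 else 0 := by
  simp only [coeff_sum, X_pow_eq_monomial, monomial_mul, one_mul, coeff_monomial,
    single_zero_add_single_one_inj, Prod.mk.eta]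
  exact sum_ite_eq' s p fun _ => 1

lemma sum_X_pow_mul_X_pow_inj [Nontrivial R] {s t : Finset (ℕ × ℕ)} :
    (∑ e ∈ s, (X 0 ^ e.1 * X 1 ^ e.2 : MvPolynomial (Fin 2) R)) =
        ∑ e ∈ t, X 0 ^ e.1 * X 1 ^ e.2 ↔ s = t := by
  refine ⟨fun h => ?_, fun h => h ▸ rfl⟩
  ext p
  have hp := congrArg (coeff (Finsupp.single 0 p.1 + Finsupp.single 1 p.2)) h
  rw [coeff_sum_X_pow_mul_X_pow, coeff_sum_X_pow_mul_X_pow] at hp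
  split_ifs at hp <;> simp_all

end Bivariate

/-- The cut-off at `C(n,2)` loses nothing for sequences of deficit `k` indexed by `dinv`,
see `mem_fitIndices`. -/
noncomputable def fitIndices (a : ℕ) (γ : ℕ → List ℕ) (n : ℕ) : Finset ℕ :=
  (range (n * (n - 1) / 2 + 1)).filter fun i => a ≤ i ∧ mind (γ i) ≤ n

section DeficitSequence

variable {k a n i : ℕ} {γ : ℕ → List ℕ}

lemma add_le_of_mind_le (hsum : ∀ i, a ≤ i → (γ i).sum = k + i) (ha : a ≤ i)
    (hm : mind (γ i) ≤ n) : k + i ≤ n * (n - 1) / 2 :=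
  hsum i ha ▸ sum_le_of_mind_le hm

lemma mem_fitIndices (hsum : ∀ i, a ≤ i → (γ i).sum = k + i) :
    i ∈ fitIndices a γ n ↔ a ≤ i ∧ mind (γ i) ≤ n := by
  refine ⟨fun h => (mem_filter.1 h).2, fun h => mem_filter.2 ⟨?_, h⟩⟩
  have := add_le_of_mind_le hsum h.1 h.2
  rw [mem_range]
  omega

variable (hsum : ∀ i, a ≤ i → (γ i).sum = k + i) (hdinv : ∀ i, a ≤ i → dinv (γ i) = i)
include hsum

lemma mem_image_fitIndices {x y : ℕ} :
    (x, y) ∈ (fitIndices a γ n).image (fun i => (n * (n - 1) / 2 - (k + i), i)) ↔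
      x + k + y = n * (n - 1) / 2 ∧ a ≤ y ∧ mind (γ y) ≤ n := by
  simp only [mem_image, mem_fitIndices hsum, Prod.mk.injEq]
  constructor
  · rintro ⟨i, hi, rfl, rfl⟩
    have := add_le_of_mind_le hsum hi.1 hi.2
    exact ⟨by omega, hi⟩
  · rintro ⟨hxy, hy⟩
    exact ⟨y, hy, by omega, rfl⟩

lemma mem_image_fitIndices_swap {x y : ℕ} :
    (x, y) ∈ (fitIndices a γ n).image (fun j => (j, n * (n - 1) / 2 - (k + j))) ↔
      x + k + y = n * (n - 1) / 2 ∧ a ≤ x ∧ mind (γ x) ≤ n := by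
  simp only [mem_image, mem_fitIndices hsum, Prod.mk.injEq]
  constructor
  · rintro ⟨j, hj, rfl, rfl⟩
    have := add_le_of_mind_le hsum hj.1 hj.2
    exact ⟨by omega, hj⟩
  · rintro ⟨hxy, hx⟩
    exact ⟨x, hx, rfl, by omega⟩

include hdinv

lemma catSeq_eq_sum :
    CatSeq a γ n = ∑ e ∈ (fitIndices a γ n).image (fun i => (n * (n - 1) / 2 - (k + i), i)),
      X 0 ^ e.1 * X 1 ^ e.2 := by
  rw [CatSeq, finsum_cond_eq_sum_of_cond_iff _ fun _ => (mem_fitIndices hsum).symm,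
    sum_image fun _ _ _ _ h => (Prod.ext_iff.1 h).2]
  refine sum_congr rfl fun i hi => ?_
  have ha := ((mem_fitIndices hsum).1 hi).1
  rw [hdinv i ha, hsum i ha]

lemma catSeqSwap_eq_sum :
    CatSeqSwap a γ n = ∑ e ∈ (fitIndices a γ n).image (fun j => (j, n * (n - 1) / 2 - (k + j))),
      X 0 ^ e.1 * X 1 ^ e.2 := by
  rw [CatSeqSwap, finsum_cond_eq_sum_of_cond_iff _ fun _ => (mem_fitIndices hsum).symm,
    sum_image fun _ _ _ _ h => (Prod.ext_iff.1 h).1]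
  refine sum_congr rfl fun j hj => ?_
  have ha := ((mem_fitIndices hsum).1 hj).1
  rw [hdinv j ha, hsum j ha, mul_comm]

end DeficitSequence

lemma catSeq_eq_catSeqSwap_iff {k a b : ℕ} {γ δ : ℕ → List ℕ}
    (hsumγ : ∀ i, a ≤ i → (γ i).sum = k + i) (hdinvγ : ∀ i, a ≤ i → dinv (γ i) = i)
    (hsumδ : ∀ j, b ≤ j → (δ j).sum = k + j) (hdinvδ : ∀ j, b ≤ j → dinv (δ j) = j) (n : ℕ) :
    CatSeq a γ n = CatSeqSwap b δ n ↔ ∀ x y : ℕ, x + k + y = n * (n - 1) / 2 →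
      ((a ≤ y ∧ mind (γ y) ≤ n) ↔ (b ≤ x ∧ mind (δ x) ≤ n)) := by
  rw [catSeq_eq_sum hsumγ hdinvγ, catSeqSwap_eq_sum hsumδ hdinvδ, sum_X_pow_mul_X_pow_inj,
    Finset.ext_iff, Prod.forall]
  simp only [mem_image_fitIndices hsumγ, mem_image_fitIndices_swap hsumδ]
  exact forall₂_congr fun _ _ => and_congr_right_iff

theorem stmt17 (k a b : ℕ) (γ δ : ℕ → List ℕ)
    (hγ : ∀ i, a ≤ i → IsPartition (γ i) ∧ dinv (γ i) = i ∧ (γ i).sum = k + i)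
    (hδ : ∀ j, b ≤ j → IsPartition (δ j) ∧ dinv (δ j) = j ∧ (δ j).sum = k + j) :
    (∀ n : ℕ, CatSeq a γ n = CatSeqSwap b δ n) ↔
    (∀ n i : ℤ,
      (∃ i' : ℕ, (i' : ℤ) = i ∧ a ≤ i' ∧ (mind (γ i') : ℤ) ≤ n) ↔
      (∃ j' : ℕ, (j' : ℤ) = C2 n - k - i ∧ b ≤ j' ∧ (mind (δ j') : ℤ) ≤ n)) := by
  have hsumγ : ∀ i, a ≤ i → (γ i).sum = k + i := fun i hi => (hγ i hi).2.2
  have hsumδ : ∀ j, b ≤ j → (δ j).sum = k + j := fun j hj => (hδ j hj).2.2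
  simp_rw [catSeq_eq_catSeqSwap_iff hsumγ (fun i hi => (hγ i hi).2.1) hsumδ
    (fun j hj => (hδ j hj).2.1)]
  rw [forall_int_iff_forall_natCast]
  · refine forall_congr' fun n => ?_
    simp only [Nat.cast_le, C2_natCast]
    exact (forall_int_iff_forall_add_eq (fun _ h => add_le_of_mind_le hsumγ h.1 h.2)
      (fun _ h => add_le_of_mind_le hsumδ h.1 h.2)).symm
  · intro n hn i
    have hγn : ∀ i', ¬ (mind (γ i') : ℤ) ≤ n := fun _ => by omega
    have hδn : ∀ j', ¬ (mind (δ j') : ℤ) ≤ n := fun _ => by omega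
    simp [hγn, hδn]
end
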